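/- arXiv:0904.3118 — 3 statements merged into one kernel-verified Lean document; each statement's English description precedes it below -/
import Mathlib

section
/- Let n ≥ 2 and let λ be an n-core. If λ has a removable box of residue i, then λ has no addable box of residue i; likewise, if λ has an addable box of residue i, then λ has no removable box of residue i. -/
open scoped BigOperators

namespace FV

/-- The standard inner product on ℝⁿ. -/
def ip (n : ℕ) (v w : Fin n → ℝ) : ℝ := ∑ i, v i * w i

/-- Standard basis vector `e i` (0-indexed; junk `0` if `i ≥ n`). -/
def e (n : ℕ) (i : ℕ) : Fin n → ℝ := fun j => if (j : ℕ) = i then 1 else 0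

/-- The subspace `V` of sum-zero vectors. -/
def V0 (n : ℕ) : Set (Fin n → ℝ) := {v | ∑ i, v i = 0}

/-- Simple root `αᵢ = eᵢ − eᵢ₊₁` (paper 1-indexing: meaningful for 1 ≤ i ≤ n−1). -/
def sroot (n : ℕ) (i : ℕ) : Fin n → ℝ := e n (i - 1) - e n i

/-- The positive roots `eᵢ − eⱼ`, i < j. -/
def PosRoot (n : ℕ) : Set (Fin n → ℝ) := {α | ∃ a b : ℕ, a < b ∧ b < n ∧ α = e n a - e n b}

/-- All roots. -/
def Roots (n : ℕ) : Set (Fin n → ℝ) := PosRoot n ∪ (-PosRoot n)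

/-- The highest root θ = e₁ − eₙ. -/
def theta (n : ℕ) : Fin n → ℝ := e n 0 - e n (n - 1)

/-- Closed half-space H⁺_{α,k} ⊆ V. -/
def Hplus (n : ℕ) (α : Fin n → ℝ) (k : ℝ) : Set (Fin n → ℝ) := {v | v ∈ V0 n ∧ k ≤ ip n v α}

/-- Closed half-space H⁻_{α,k} ⊆ V. -/
def Hminus (n : ℕ) (α : Fin n → ℝ) (k : ℝ) : Set (Fin n → ℝ) := {v | v ∈ V0 n ∧ ip n v α ≤ k}

/-- Affine hyperplane H_{α,k} ⊆ V. -/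
def Hyp (n : ℕ) (α : Fin n → ℝ) (k : ℝ) : Set (Fin n → ℝ) := {v | v ∈ V0 n ∧ ip n v α = k}

/-- The (open) fundamental alcove A₀. -/
def A0 (n : ℕ) : Set (Fin n → ℝ) :=
  {v | v ∈ V0 n ∧ (∀ i : ℕ, 1 ≤ i → i ≤ n - 1 → 0 < ip n v (sroot n i)) ∧ ip n v (theta n) < 1}

/-- The dominant chamber. -/
def Dominant (n : ℕ) : Set (Fin n → ℝ) :=
  {v | v ∈ V0 n ∧ ∀ i : ℕ, 1 ≤ i → i ≤ n - 1 → 0 ≤ ip n v (sroot n i)}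

/-- Coordinate swap, as a permutation of ℝⁿ. -/
def swapPerm (n : ℕ) (a b : Fin n) : Equiv.Perm (Fin n → ℝ) :=
  (Equiv.swap a b).arrowCongr (Equiv.refl ℝ)

/-- The affine reflection s₀ : (a₁,...,aₙ) ↦ (aₙ+1, a₂, ..., a_{n−1}, a₁−1). -/
def s0 (n : ℕ) : Equiv.Perm (Fin n → ℝ) :=
  if h : 2 ≤ n then
    (swapPerm n ⟨0, by omega⟩ ⟨n - 1, by omega⟩).trans (Equiv.addLeft (e n 0 - e n (n - 1)))
  else Equiv.refl _

/-- The generators s₀, s₁, ..., s_{n−1} of the affine symmetric group; for i ≥ 1,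
`gen n i` swaps the (i−1)-st and i-th (0-indexed) coordinates. -/
def gen (n : ℕ) (i : Fin n) : Equiv.Perm (Fin n → ℝ) :=
  if (i : ℕ) = 0 then s0 n
  else swapPerm n ⟨(i : ℕ) - 1, lt_of_le_of_lt (Nat.sub_le _ _) i.isLt⟩ i

/-- The affine symmetric group Ŝₙ, acting on ℝⁿ. -/
def AffS (n : ℕ) : Subgroup (Equiv.Perm (Fin n → ℝ)) := Subgroup.closure (Set.range (gen n))

/-- The finite symmetric group Sₙ ⊆ Ŝₙ, generated by s₁, ..., s_{n−1}. -/
def SymS (n : ℕ) : Subgroup (Equiv.Perm (Fin n → ℝ)) :=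
  Subgroup.closure {g | ∃ i : Fin n, (i : ℕ) ≠ 0 ∧ g = gen n i}

/-- Coxeter length: word length in the generators. -/
noncomputable def len (n : ℕ) (w : Equiv.Perm (Fin n → ℝ)) : ℕ :=
  sInf {k | ∃ l : List (Fin n), l.length = k ∧ (l.map (gen n)).prod = w}

/-- w is a minimal length representative of its left coset wSₙ. -/
def IsMinCosetRep (n : ℕ) (w : Equiv.Perm (Fin n → ℝ)) : Prop :=
  w ∈ AffS n ∧ ∀ u ∈ SymS n, len n w ≤ len n (w * u)

/-- The complement (in V) of the m-Shi arrangement. -/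
def ShiComp (n : ℕ) (m : ℕ) : Set (Fin n → ℝ) :=
  V0 n \ ⋃ (α ∈ PosRoot n), ⋃ (k : ℤ), ⋃ (_ : -(m : ℤ) < k ∧ k ≤ (m : ℤ)), Hyp n α (k : ℝ)

/-- The alcoves wA₀ and w'A₀ lie in the same region (connected component) of the
complement of the m-Shi arrangement. -/
def SameRegion (n m : ℕ) (w w' : Equiv.Perm (Fin n → ℝ)) : Prop :=
  ∃ v ∈ ⇑w '' A0 n, ∃ v' ∈ ⇑w' '' A0 n, v' ∈ connectedComponentIn (ShiComp n m) v

/-- The alcove wA₀ is m-minimal. -/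
def MMinimal (n m : ℕ) (w : Equiv.Perm (Fin n → ℝ)) : Prop :=
  ∀ w' ∈ AffS n, SameRegion n m w w' → len n w ≤ len n w'

/-- `w(α + kδ) = β + lδ`: the affine-linear function v ↦ ⟨v,α⟩ + k, pulled back
along w⁻¹, equals v ↦ ⟨v,β⟩ + l on V. -/
def AffMapsTo (n : ℕ) (w : Equiv.Perm (Fin n → ℝ)) (α : Fin n → ℝ) (k : ℤ)
    (β : Fin n → ℝ) (l : ℤ) : Prop :=
  ∀ v ∈ V0 n, ip n (w⁻¹ v) α + (k : ℝ) = ip n v β + (l : ℝ)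

/-- α + kδ is a positive affine root. -/
def PosAff (n : ℕ) (α : Fin n → ℝ) (k : ℤ) : Prop :=
  α ∈ Roots n ∧ (0 < k ∨ (k = 0 ∧ α ∈ PosRoot n))

/-- α + kδ is a negative affine root. -/
def NegAff (n : ℕ) (α : Fin n → ℝ) (k : ℤ) : Prop :=
  α ∈ Roots n ∧ (k < 0 ∨ (k = 0 ∧ -α ∈ PosRoot n))

/-- α + kδ ∈ Inv(w). -/
def InInv (n : ℕ) (w : Equiv.Perm (Fin n → ℝ)) (α : Fin n → ℝ) (k : ℤ) : Prop :=
  PosAff n α k ∧ ∃ β : Fin n → ℝ, ∃ l : ℤ, NegAff n β l ∧ AffMapsTo n w α k β l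

/-- The simple affine root αᵢ, as a pair (finite root, δ-coefficient); α₀ = δ − θ. -/
def sAff (n : ℕ) (i : Fin n) : (Fin n → ℝ) × ℤ :=
  if (i : ℕ) = 0 then (-(theta n), 1) else (sroot n (i : ℕ), 0)

/-- Hook length of the (0-indexed) box (i,j):
1 + #boxes strictly to the right + #boxes strictly below. -/
def hook (lam : YoungDiagram) (i j : ℕ) : ℕ :=
  (lam.rowLen i - (j + 1)) + (lam.colLen j - (i + 1)) + 1

/-- λ is an s-core: no hook length is divisible by s. -/
def IsCore (s : ℕ) (lam : YoungDiagram) : Prop := ∀ c ∈ lam.cells, ¬ (s ∣ hook lam c.1 c.2)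

/-- A removable box of λ: a box of λ of hook length 1. -/
def Removable (lam : YoungDiagram) (c : ℕ × ℕ) : Prop := c ∈ lam ∧ hook lam c.1 c.2 = 1

/-- An addable box of λ: a box outside λ whose adjunction gives a partition. -/
def Addable (lam : YoungDiagram) (c : ℕ × ℕ) : Prop :=
  c ∉ lam ∧ ∃ mu : YoungDiagram, (mu.cells : Set (ℕ × ℕ)) = insert c (lam.cells : Set (ℕ × ℕ))

/-- The residue (j − i) mod n of a box. -/
def res (n : ℕ) (c : ℕ × ℕ) : ZMod n := (c.2 : ZMod n) - (c.1 : ZMod n)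

/-- A removable box of residue r. -/
def RemovableRes (n : ℕ) (r : ZMod n) (lam : YoungDiagram) (c : ℕ × ℕ) : Prop :=
  Removable lam c ∧ res n c = r

/-- An addable box of residue r. -/
def AddableRes (n : ℕ) (r : ZMod n) (lam : YoungDiagram) (c : ℕ × ℕ) : Prop :=
  Addable lam c ∧ res n c = r

open scoped Classical in
/-- The cell set of sᵣλ: adjoin all addable r-boxes if there are any, else delete all
removable r-boxes if there are any, else λ itself. -/
noncomputable def sActSet (n : ℕ) (r : ZMod n) (lam : YoungDiagram) : Set (ℕ × ℕ) :=
  if ∃ c, AddableRes n r lam c then (lam.cells : Set (ℕ × ℕ)) ∪ {c | AddableRes n r lam c}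
  else if ∃ c, RemovableRes n r lam c then
    (lam.cells : Set (ℕ × ℕ)) \ {c | RemovableRes n r lam c}
  else (lam.cells : Set (ℕ × ℕ))

open scoped Classical in
/-- sᵣλ as a Young diagram (junk value λ if the resulting cell set is not a diagram). -/
noncomputable def sFun (n : ℕ) (r : ZMod n) (lam : YoungDiagram) : YoungDiagram :=
  if h : ∃ mu : YoungDiagram, (mu.cells : Set (ℕ × ℕ)) = sActSet n r lam then h.choose else lam

/-- The partition s_{i₁}(s_{i₂}(⋯ s_{i_k}(∅))) for a word l = [i₁, ..., i_k]. -/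
noncomputable def wordAct (n : ℕ) (l : List (Fin n)) : YoungDiagram :=
  l.foldr (fun i mu => sFun n ((i : ℕ) : ZMod n) mu) ⊥

/-- `w∅ = λ`: some word for w sends the empty partition to λ. -/
def ActsToCore (n : ℕ) (w : Equiv.Perm (Fin n → ℝ)) (lam : YoungDiagram) : Prop :=
  ∃ l : List (Fin n), (l.map (gen n)).prod = w ∧ wordAct n l = lam

/-- The bead positions of the abacus of λ: first-column hook lengths and all
negative integers. -/
def beads (lam : YoungDiagram) : Set ℤ :=
  {z | z < 0 ∨ ∃ k : ℕ, (k, 0) ∈ lam ∧ z = (hook lam k 0 : ℤ)}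

/-- The largest level of runner c containing a bead (entry rn + c is at level r). -/
noncomputable def maxLevel (n : ℕ) (B : Set ℤ) (c : ℕ) : ℤ :=
  sSup {r : ℤ | r * (n : ℤ) + (c : ℤ) ∈ B}

/-- The balance number of an abacus. -/
noncomputable def balance (n : ℕ) (B : Set ℤ) : ℤ := ∑ c ∈ Finset.range n, maxLevel n B c

/-- Shift all abacus entries by d. -/
def shiftSet (d : ℤ) (B : Set ℤ) : Set ℤ := {z | z - d ∈ B}

/-- The vector n⃗(λ): largest bead levels of the runners of the balanced abacus of λ. -/
noncomputable def nvec (n : ℕ) (lam : YoungDiagram) : Fin n → ℤ :=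
  fun i => maxLevel n (shiftSet (-(balance n (beads lam))) (beads lam)) (i : ℕ)

/-- n⃗(λ) as a real vector. -/
noncomputable def nvecR (n : ℕ) (lam : YoungDiagram) : Fin n → ℝ :=
  fun i => ((nvec n lam i : ℤ) : ℝ)

/-- The root lattice Q ⊆ V: integer vectors with sum zero. -/
def QSet (n : ℕ) : Set (Fin n → ℝ) := {v | (∀ i, ∃ z : ℤ, v i = (z : ℝ)) ∧ v ∈ V0 n}

/-- The region 𝔄_m. -/
def Amreg (n m : ℕ) : Set (Fin n → ℝ) :=
  {v | v ∈ V0 n ∧ (∀ i : ℕ, 1 ≤ i → i ≤ n - 1 → -(m : ℝ) ≤ ip n v (sroot n i)) ∧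
    ip n v (theta n) ≤ (m : ℝ) + 1}

/-- The dominant regions of the m-Shi arrangement. -/
def DomRegions (n m : ℕ) : Set (Set (Fin n → ℝ)) :=
  {R | (∃ v ∈ ShiComp n m, R = connectedComponentIn (ShiComp n m) v) ∧ R ⊆ Dominant n}

/-- The m-minimal alcoves lying in the dominant chamber. -/
def MinDomAlcoves (n m : ℕ) : Set (Set (Fin n → ℝ)) :=
  {A | ∃ w ∈ AffS n, A = ⇑w '' A0 n ∧ MMinimal n m w ∧ A ⊆ Dominant n}

/-- The m-minimal alcoves. -/
def MinAlcoves (n m : ℕ) : Set (Set (Fin n → ℝ)) :=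
  {A | ∃ w ∈ AffS n, A = ⇑w '' A0 n ∧ MMinimal n m w}

/-- The alcoves contained in the region 𝔄_m. -/
def AmAlcoves (n m : ℕ) : Set (Set (Fin n → ℝ)) :=
  {A | ∃ w ∈ AffS n, A = ⇑w '' A0 n ∧ A ⊆ Amreg n m}

def content (c : ℕ × ℕ) : ℤ := c.2 - c.1

theorem res_eq_res_iff {n : ℕ} {p q : ℕ × ℕ} :
    res n p = res n q ↔ (n : ℤ) ∣ content q - content p := by
  have hcast : ∀ c : ℕ × ℕ, res n c = ((content c : ℤ) : ZMod n) := fun c => by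
    simp [res, content]
  rw [hcast, hcast, ZMod.intCast_eq_intCast_iff_dvd_sub]

theorem hook_intCast {lam : YoungDiagram} {i j : ℕ} (h : (i, j) ∈ lam) :
    (hook lam i j : ℤ) = content (i, lam.rowLen i) - content (lam.colLen j, j) - 1 := by
  have hrow := YoungDiagram.mem_iff_lt_rowLen.mp h
  have hcol := YoungDiagram.mem_iff_lt_colLen.mp h
  simp only [hook, content]
  omega

section

variable {lam : YoungDiagram}

theorem Addable.mem_of_le {c x : ℕ × ℕ} (h : Addable lam c) (hle : x ≤ c) (hne : x ≠ c) :
    x ∈ lam := by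
  obtain ⟨-, mu, hmu⟩ := h
  have hx : x ∈ (mu.cells : Set (ℕ × ℕ)) :=
    mu.isLowerSet hle (by rw [hmu]; exact Set.mem_insert c _)
  rw [hmu] at hx
  exact (Set.mem_insert_iff.mp hx).resolve_left hne

theorem Addable.rowLen_eq {c d : ℕ} (h : Addable lam (c, d)) : lam.rowLen c = d := by
  have hle : lam.rowLen c ≤ d :=
    not_lt.mp fun hlt => h.1 (YoungDiagram.mem_iff_lt_rowLen.mpr hlt)
  rcases Nat.eq_zero_or_pos d with hd | hd
  · omega
  · have hleft := h.mem_of_le (x := (c, d - 1)) (Prod.mk_le_mk.mpr ⟨le_rfl, Nat.sub_le d 1⟩)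
      (by simp only [ne_eq, Prod.mk.injEq]; omega)
    have := YoungDiagram.mem_iff_lt_rowLen.mp hleft
    omega

theorem Addable.colLen_eq {c d : ℕ} (h : Addable lam (c, d)) : lam.colLen d = c := by
  have hle : lam.colLen d ≤ c :=
    not_lt.mp fun hlt => h.1 (YoungDiagram.mem_iff_lt_colLen.mpr hlt)
  rcases Nat.eq_zero_or_pos c with hc | hc
  · omega
  · have hup := h.mem_of_le (x := (c - 1, d)) (Prod.mk_le_mk.mpr ⟨Nat.sub_le c 1, le_rfl⟩)
      (by simp only [ne_eq, Prod.mk.injEq]; omega)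
    have := YoungDiagram.mem_iff_lt_colLen.mp hup
    omega

theorem Removable.rowLen_eq {a b : ℕ} (h : Removable lam (a, b)) : lam.rowLen a = b + 1 := by
  have := YoungDiagram.mem_iff_lt_rowLen.mp h.1
  have := h.2
  simp only [hook] at this
  omega

theorem Removable.colLen_eq {a b : ℕ} (h : Removable lam (a, b)) : lam.colLen b = a + 1 := by
  have := YoungDiagram.mem_iff_lt_colLen.mp h.1
  have := h.2
  simp only [hook] at this
  omega

/-- Boxes of equal residue, removable at `(a, b)` and addable at `(c, d)`, cannot share a row
(their contents differ by `1`); otherwise the box `(min a c, min b d)` lies in `λ` and its hook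
length is `±` the difference of their contents, a multiple of `n`. -/
theorem IsCore.res_ne_of_removable_of_addable {n : ℕ} (hn : n ≠ 1) (hcore : IsCore n lam)
    {p q : ℕ × ℕ} (hp : Removable lam p) (hq : Addable lam q) : res n p ≠ res n q := by
  obtain ⟨a, b⟩ := p
  obtain ⟨c, d⟩ := q
  intro hres
  have hdvd := res_eq_res_iff.mp hres
  have hrow := hp.rowLen_eq
  have hcol := hp.colLen_eq
  have hrow' := hq.rowLen_eq
  have hcol' := hq.colLen_eq
  have no_hook_dvd : ∀ {i j : ℕ}, (i, j) ∈ lam → ¬ (n : ℤ) ∣ hook lam i j := fun hij hdvd =>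
    hcore _ ((lam.mem_cells _).mpr hij) (Int.natCast_dvd_natCast.mp hdvd)
  simp only [content] at hdvd
  rcases lt_trichotomy a c with hac | rfl | hac
  · have hbox : (a, d) ∈ lam := YoungDiagram.mem_iff_lt_colLen.mpr (by omega)
    have hhook : (hook lam a d : ℤ) = -((d - c : ℤ) - (b - a)) := by
      rw [hook_intCast hbox, hrow, hcol']
      simp only [content]
      push_cast
      ring
    exact no_hook_dvd hbox (hhook ▸ hdvd.neg_right)
  · have hone : (n : ℤ) ∣ 1 := by convert hdvd using 1; omega
    exact hn (Nat.dvd_one.mp (Int.natCast_dvd_natCast.mp hone))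
  · have hbox : (c, b) ∈ lam := YoungDiagram.mem_iff_lt_rowLen.mpr (by
      have := lam.rowLen_anti c a hac.le; omega)
    have hhook : (hook lam c b : ℤ) = (d - c : ℤ) - (b - a) := by
      rw [hook_intCast hbox, hrow', hcol]
      simp only [content]
      push_cast
      ring
    exact no_hook_dvd hbox (hhook ▸ hdvd)

end

/-- An n-core with a removable i-box has no addable i-box, and
vice versa. -/
theorem statement5 (n : ℕ) (hn : 2 ≤ n) (lam : YoungDiagram) (hcore : IsCore n lam)
    (r : ZMod n) :
    ((∃ c, RemovableRes n r lam c) → ∀ c, ¬ AddableRes n r lam c) ∧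
    ((∃ c, AddableRes n r lam c) → ∀ c, ¬ RemovableRes n r lam c) := by
  have hn1 : n ≠ 1 := by omega
  constructor
  · rintro ⟨p, hp, rfl⟩ q ⟨hq, hres⟩
    exact hcore.res_ne_of_removable_of_addable hn1 hp hq hres.symm
  · rintro ⟨q, hq, rfl⟩ p ⟨hp, hres⟩
    exact hcore.res_ne_of_removable_of_addable hn1 hp hq hres

end FV
end

section
/- Let n ≥ 2, let λ be an n-core, and let i ∈ ℤ/nℤ. Define sᵢλ to be λ together with all addable i-boxes if λ has at least one addable i-box, λ with all removable i-boxes deleted if λ has at least one removable i-box, and λ otherwise. Then sᵢλ is again an n-core. -/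
open scoped BigOperators

namespace FV

/-!
Encode `λ` by its beta-set `B = {λᵢ - i}`. The hook lengths of `λ` are the differences `b - c`
with `b ∈ B`, `c ∉ B`, `c < b`, so `λ` is an `n`-core iff `B` is closed under `z ↦ z - n`.
Let `τ` be the involution of `ℤ` exchanging the residue classes `r` and `r + 1` by `z ↦ z ± 1`.
Moving each bead of `B` to its `τ`-image whenever that position is empty adds all addable and
removes all removable `r`-boxes, and the resulting beta-set is `τ⁻¹(B)`. Since `τ` commutes with
`z ↦ z - n`, it is again closed. Closedness of `B` also forbids addable and removable `r`-boxes
to coexist, so for a core this diagram is `sᵣλ`.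
-/

section BetaNumbers

variable (lam : YoungDiagram)

def betaNum (i : ℕ) : ℤ := lam.rowLen i - i

def betaSet : Set ℤ := Set.range (betaNum lam)

/-- The column analogue of `betaNum`: these are exactly the integers missing from `betaSet lam`. -/
def colBeta (j : ℕ) : ℤ := j + 1 - lam.colLen j

variable {lam}

theorem mem_iff_colBeta_lt_betaNum {i j : ℕ} : (i, j) ∈ lam ↔ colBeta lam j < betaNum lam i := by
  have hrow := @YoungDiagram.mem_iff_lt_rowLen lam i j
  have hcol := @YoungDiagram.mem_iff_lt_colLen lam i j
  simp only [colBeta, betaNum]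
  constructor
  · intro h
    have := hrow.mp h
    have := hcol.mp h
    omega
  · intro h
    by_contra hc
    have := mt hrow.mpr hc
    have := mt hcol.mpr hc
    omega

theorem colBeta_notMem_betaSet (j : ℕ) : colBeta lam j ∉ betaSet lam := by
  rintro ⟨i, hi⟩
  have hrow := @YoungDiagram.mem_iff_lt_rowLen lam i j
  have hcol := @YoungDiagram.mem_iff_lt_colLen lam i j
  simp only [colBeta, betaNum] at hi
  by_cases h : (i, j) ∈ lam
  · have := hrow.mp h
    have := hcol.mp h
    omega
  · have := mt hrow.mpr h
    have := mt hcol.mpr h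
    omega

theorem exists_colBeta_eq {x : ℤ} (hx : x ∉ betaSet lam) : ∃ j, colBeta lam j = x := by
  classical
  have hex : ∃ i, betaNum lam i < x := by
    refine ⟨lam.rowLen 0 + x.natAbs + 1, ?_⟩
    have := lam.rowLen_anti 0 (lam.rowLen 0 + x.natAbs + 1) (Nat.zero_le _)
    simp only [betaNum]
    omega
  set m := Nat.find hex
  have hm : betaNum lam m < x := Nat.find_spec hex
  have hbefore : ∀ k < m, x < betaNum lam k := fun k hk =>
    lt_of_le_of_ne (not_lt.mp (Nat.find_min hex hk)) fun h => hx ⟨k, h.symm⟩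
  simp only [betaNum] at hm hbefore
  -- the column of the gap `x` is `x + m - 1`, and it has exactly `m` cells
  have hcol : lam.colLen (x + m - 1).toNat = m := eq_of_forall_lt_iff fun k => by
    rw [← YoungDiagram.mem_iff_lt_colLen, YoungDiagram.mem_iff_lt_rowLen]
    constructor
    · intro hk
      by_contra hkm
      have := lam.rowLen_anti m k (not_lt.mp hkm)
      omega
    · intro hk
      have := hbefore (m - 1) (by omega)
      have := lam.rowLen_anti k (m - 1) (by omega)
      omega
  exact ⟨(x + m - 1).toNat, by simp only [colBeta, hcol]; omega⟩

theorem hook_eq_betaNum_sub_colBeta {i j : ℕ} (h : (i, j) ∈ lam) :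
    (hook lam i j : ℤ) = betaNum lam i - colBeta lam j := by
  have := YoungDiagram.mem_iff_lt_rowLen.mp h
  have := YoungDiagram.mem_iff_lt_colLen.mp h
  simp only [hook, betaNum, colBeta]
  omega

end BetaNumbers

theorem mem_of_le_of_dvd_sub {B : Set ℤ} {n : ℕ} (hB : ∀ z ∈ B, z - n ∈ B)
    {z w : ℤ} (hz : z ∈ B) (hwz : w ≤ z) (hdvd : (n : ℤ) ∣ z - w) : w ∈ B := by
  have hiter : ∀ k : ℕ, z - k * n ∈ B := by
    intro k
    induction k with
    | zero => simpa using hz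
    | succ k ih => simpa [add_mul, sub_add_eq_sub_sub] using hB _ ih
  obtain ⟨k, hk⟩ := hdvd
  rcases Nat.eq_zero_or_pos n with rfl | hn
  · rwa [show w = z by rw [Nat.cast_zero, zero_mul] at hk; linarith]
  · have hk0 : 0 ≤ k := by nlinarith
    lift k to ℕ using hk0
    convert hiter k using 1
    linarith

theorem isCore_iff_forall_sub_mem_betaSet {n : ℕ} {lam : YoungDiagram} :
    IsCore n lam ↔ ∀ z ∈ betaSet lam, z - n ∈ betaSet lam := by
  constructor
  · rintro hcore _ ⟨i, rfl⟩
    by_contra hgap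
    obtain ⟨j, hj⟩ := exists_colBeta_eq hgap
    have hmem : (i, j) ∈ lam := mem_iff_colBeta_lt_betaNum.mpr <| by
      rcases Nat.eq_zero_or_pos n with rfl | hn
      · exact absurd ⟨i, by simp⟩ hgap
      · omega
    have hhook : hook lam i j = n := by
      have := hook_eq_betaNum_sub_colBeta hmem
      omega
    exact hcore (i, j) ((YoungDiagram.mem_cells _).mpr hmem) (hhook ▸ dvd_refl n)
  · rintro hB ⟨i, j⟩ hmem hdvd
    rw [YoungDiagram.mem_cells] at hmem
    have hhook := hook_eq_betaNum_sub_colBeta hmem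
    refine colBeta_notMem_betaSet j (mem_of_le_of_dvd_sub hB ⟨i, rfl⟩ ?_ ?_)
    · have : 1 ≤ hook lam i j := by simp only [hook]; omega
      omega
    · rw [← hhook]
      exact Int.natCast_dvd_natCast.mpr hdvd

section Runners

variable (n : ℕ) (r : ZMod n)

/-- The involution of `ℤ` exchanging runners `r` and `r + 1` of the `n`-abacus. -/
def runnerSwap (z : ℤ) : ℤ :=
  if (z : ZMod n) = r then z + 1 else if (z : ZMod n) = r + 1 then z - 1 else z

open scoped Classical in
noncomputable def slideBead (B : Set ℤ) (z : ℤ) : ℤ :=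
  if runnerSwap n r z ∈ B then z else runnerSwap n r z

variable {n r} {B : Set ℤ} {z : ℤ}

theorem runnerSwap_sub_natCast (z : ℤ) : runnerSwap n r (z - n) = runnerSwap n r z - n := by
  have hcast : ((z - n : ℤ) : ZMod n) = z := by simp
  simp only [runnerSwap, hcast]
  split_ifs <;> ring

theorem runnerSwap_runnerSwap [Nontrivial (ZMod n)] (z : ℤ) :
    runnerSwap n r (runnerSwap n r z) = z := by
  have hr : r + 1 ≠ r := by simp
  unfold runnerSwap
  by_cases hup : (z : ZMod n) = r
  · have hcast : ((z + 1 : ℤ) : ZMod n) = r + 1 := by push_cast; rw [hup]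
    rw [if_pos hup, if_neg (hcast ▸ hr), if_pos hcast]
    ring
  · by_cases hdown : (z : ZMod n) = r + 1
    · have hcast : ((z - 1 : ℤ) : ZMod n) = r := by push_cast; rw [hdown]; ring
      rw [if_neg hup, if_pos hdown, if_pos hcast]
      ring
    · rw [if_neg hup, if_neg hdown, if_neg hup, if_neg hdown]

theorem sub_one_le_runnerSwap : z - 1 ≤ runnerSwap n r z := by
  unfold runnerSwap; split_ifs <;> omega

theorem runnerSwap_le_add_one : runnerSwap n r z ≤ z + 1 := by
  unfold runnerSwap; split_ifs <;> omega

theorem runnerSwap_eq_add_one_iff : runnerSwap n r z = z + 1 ↔ (z : ZMod n) = r := by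
  unfold runnerSwap
  split_ifs with hup
  · exact iff_of_true rfl hup
  · exact iff_of_false (by omega) hup
  · exact iff_of_false (by omega) hup

theorem runnerSwap_eq_sub_one_iff [Nontrivial (ZMod n)] :
    runnerSwap n r z = z - 1 ↔ (z : ZMod n) = r + 1 := by
  unfold runnerSwap
  split_ifs with hup hdown
  · exact iff_of_false (by omega) fun hdown => by simp [hdown] at hup
  · exact iff_of_true rfl hdown
  · exact iff_of_false (by omega) hdown

theorem slideBead_notMem (h : slideBead n r B z ≠ z) : slideBead n r B z ∉ B := by
  unfold slideBead at *
  split_ifs at * with hmem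
  · exact absurd rfl h
  · exact hmem

theorem slideBead_eq_runnerSwap (h : slideBead n r B z ≠ z) :
    slideBead n r B z = runnerSwap n r z := by
  unfold slideBead at *
  split_ifs at * with hmem
  · exact absurd rfl h
  · rfl

theorem sub_one_le_slideBead : z - 1 ≤ slideBead n r B z := by
  unfold slideBead; split_ifs
  · omega
  · exact sub_one_le_runnerSwap

theorem slideBead_le_add_one : slideBead n r B z ≤ z + 1 := by
  unfold slideBead; split_ifs
  · omega
  · exact runnerSwap_le_add_one

theorem slideBead_eq_add_one_iff :
    slideBead n r B z = z + 1 ↔ (z : ZMod n) = r ∧ z + 1 ∉ B := by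
  rw [← runnerSwap_eq_add_one_iff]
  unfold slideBead
  split_ifs with hmem
  · constructor
    · omega
    · rintro ⟨hswap, hnot⟩; exact absurd (hswap ▸ hmem) hnot
  · exact ⟨fun h => ⟨h, h ▸ hmem⟩, And.left⟩

theorem slideBead_eq_sub_one_iff [Nontrivial (ZMod n)] :
    slideBead n r B z = z - 1 ↔ (z : ZMod n) = r + 1 ∧ z - 1 ∉ B := by
  rw [← runnerSwap_eq_sub_one_iff]
  unfold slideBead
  split_ifs with hmem
  · constructor
    · omega
    · rintro ⟨hswap, hnot⟩; exact absurd (hswap ▸ hmem) hnot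
  · exact ⟨fun h => ⟨h, h ▸ hmem⟩, And.left⟩

theorem slideBead_eq_self (hup : z + 1 ∈ B) (hdown : z - 1 ∈ B) : slideBead n r B z = z := by
  have hne_up : slideBead n r B z ≠ z + 1 := fun h =>
    absurd (h ▸ hup) (slideBead_notMem (by omega))
  have hne_down : slideBead n r B z ≠ z - 1 := fun h =>
    absurd (h ▸ hdown) (slideBead_notMem (by omega))
  have := @sub_one_le_slideBead n r B z
  have := @slideBead_le_add_one n r B z
  omega

theorem strictMonoOn_slideBead [Nontrivial (ZMod n)] : StrictMonoOn (slideBead n r B) B := by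
  intro z hz w hw hzw
  by_contra hle
  have := @slideBead_le_add_one n r B z
  have := @sub_one_le_slideBead n r B w
  -- a bead that moves lands on an empty position, and distinct beads move to distinct places
  obtain rfl | rfl : w = z + 1 ∨ w = z + 2 := by omega
  · have hz' : slideBead n r B z ≠ z + 1 := fun h =>
      absurd (h ▸ hw) (slideBead_notMem (by omega))
    have hw' : slideBead n r B (z + 1) ≠ z := fun h =>
      absurd (h ▸ hz) (slideBead_notMem (by omega))
    omega
  · have hswap : runnerSwap n r z = runnerSwap n r (z + 2) := by
      rw [← slideBead_eq_runnerSwap (B := B) (by omega),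
        ← slideBead_eq_runnerSwap (B := B) (by omega)]
      omega
    have := congrArg (runnerSwap n r) hswap
    rw [runnerSwap_runnerSwap, runnerSwap_runnerSwap] at this
    omega

theorem mem_image_slideBead_iff [Nontrivial (ZMod n)] {x : ℤ} :
    x ∈ slideBead n r B '' B ↔ runnerSwap n r x ∈ B := by
  constructor
  · rintro ⟨z, hz, rfl⟩
    unfold slideBead
    split_ifs with hmem
    · exact hmem
    · rwa [runnerSwap_runnerSwap]
  · intro hx
    by_cases hxB : x ∈ B
    · exact ⟨x, hxB, if_pos hx⟩
    · refine ⟨runnerSwap n r x, hx, ?_⟩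
      rw [slideBead, runnerSwap_runnerSwap, if_neg hxB]

theorem sub_one_mem_of_add_one_notMem (hB : ∀ z ∈ B, z - n ∈ B) {w : ℤ} (hz : z ∈ B)
    (hzr : (z : ZMod n) = r) (hz1 : z + 1 ∉ B) (hw : w ∈ B) (hwr : (w : ZMod n) = r + 1) :
    w - 1 ∈ B := by
  rcases le_or_gt (w - 1) z with hle | hlt
  · refine mem_of_le_of_dvd_sub hB hz hle ((ZMod.intCast_eq_intCast_iff_dvd_sub _ _ _).mp ?_)
    push_cast
    rw [hzr, hwr, add_sub_cancel_right]
  · refine absurd (mem_of_le_of_dvd_sub hB hw (by omega)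
      ((ZMod.intCast_eq_intCast_iff_dvd_sub _ _ _).mp ?_)) hz1
    push_cast
    rw [hzr, hwr]

end Runners

section Diagrams

def ofRows (ρ : ℕ → ℕ) (hρ : Antitone ρ) (N : ℕ) (hN : ρ N = 0) : YoungDiagram where
  cells := (Finset.range N ×ˢ Finset.range (ρ 0)).filter fun c => c.2 < ρ c.1
  isLowerSet := by
    intro a b hba ha
    simp only [Finset.coe_filter, Finset.mem_product, Finset.mem_range, Set.mem_ofPred_eq] at ha ⊢
    have := hρ hba.1
    have := hρ (Nat.zero_le b.1)
    have : b.1 < N := by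
      by_contra h
      have := hρ (not_lt.mp h)
      omega
    have := hba.2
    omega

theorem mem_ofRows {ρ : ℕ → ℕ} {hρ : Antitone ρ} {N : ℕ} {hN : ρ N = 0} {i j : ℕ} :
    (i, j) ∈ ofRows ρ hρ N hN ↔ j < ρ i := by
  change (i, j) ∈ (Finset.range N ×ˢ Finset.range (ρ 0)).filter _ ↔ _
  simp only [Finset.mem_filter, Finset.mem_product, Finset.mem_range]
  refine ⟨And.right, fun h => ⟨⟨?_, ?_⟩, h⟩⟩
  · by_contra hi
    have := hρ (not_lt.mp hi)
    omega
  · have := hρ (Nat.zero_le i)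
    omega

theorem rowLen_ofRows {ρ : ℕ → ℕ} {hρ : Antitone ρ} {N : ℕ} {hN : ρ N = 0} (i : ℕ) :
    (ofRows ρ hρ N hN).rowLen i = ρ i :=
  eq_of_forall_lt_iff fun _ => by rw [← YoungDiagram.mem_iff_lt_rowLen, mem_ofRows]

variable {lam : YoungDiagram} {i j : ℕ}

theorem rowLen_eq_zero_of_colLen_le {k : ℕ} (hk : lam.colLen 0 ≤ k) : lam.rowLen k = 0 := by
  by_contra h
  exact (not_lt.mpr hk) (YoungDiagram.mem_iff_lt_colLen.mp
    (YoungDiagram.mem_iff_lt_rowLen.mpr (by omega)))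

theorem addable_iff : Addable lam (i, j) ↔ j = lam.rowLen i ∧ i = lam.colLen j := by
  constructor
  · rintro ⟨hnot, mu, hmu⟩
    have hmem : ∀ c, c ∈ mu ↔ c = (i, j) ∨ c ∈ lam := fun c => by
      simpa using Set.ext_iff.mp hmu c
    have hij : (i, j) ∈ mu := (hmem _).mpr (Or.inl rfl)
    have hrow := mt YoungDiagram.mem_iff_lt_rowLen.mpr hnot
    have hcol := mt YoungDiagram.mem_iff_lt_colLen.mpr hnot
    have h1 := (hmem _).mp (mu.up_left_mem le_rfl (not_lt.mp hrow) hij)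
    have h2 := (hmem _).mp (mu.up_left_mem (not_lt.mp hcol) le_rfl hij)
    simp only [Prod.mk.injEq, YoungDiagram.mem_iff_lt_rowLen, lt_irrefl, or_false] at h1
    simp only [Prod.mk.injEq, YoungDiagram.mem_iff_lt_colLen, lt_irrefl, or_false] at h2
    exact ⟨h1.2.symm, h2.1.symm⟩
  · rintro ⟨hj, hi⟩
    refine ⟨by rw [YoungDiagram.mem_iff_lt_rowLen]; omega,
      ⟨insert (i, j) lam.cells, ?_⟩, by simp⟩
    rintro ⟨a, b⟩ ⟨c, d⟩ hle hab
    simp only [Finset.coe_insert, Set.mem_insert_iff, Finset.mem_coe, YoungDiagram.mem_cells,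
      Prod.mk.injEq] at hab ⊢
    obtain ⟨hca, hdb⟩ := Prod.mk_le_mk.mp hle
    rcases hab with ⟨rfl, rfl⟩ | hab
    · by_cases hdb' : d < b
      · exact Or.inr (lam.up_left_mem hca le_rfl (YoungDiagram.mem_iff_lt_rowLen.mpr (by omega)))
      · obtain rfl : d = b := by omega
        by_cases hca' : c < a
        · exact Or.inr (YoungDiagram.mem_iff_lt_colLen.mpr (by omega))
        · exact Or.inl ⟨by omega, rfl⟩
    · exact Or.inr (lam.up_left_mem hca hdb hab)

theorem removable_iff : Removable lam (i, j) ↔ j + 1 = lam.rowLen i ∧ i + 1 = lam.colLen j := by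
  have hrow := @YoungDiagram.mem_iff_lt_rowLen lam i j
  have hcol := @YoungDiagram.mem_iff_lt_colLen lam i j
  simp only [Removable, hook]
  constructor
  · rintro ⟨h, hh⟩
    have := hrow.mp h
    have := hcol.mp h
    omega
  · rintro ⟨h1, h2⟩
    exact ⟨hrow.mpr (by omega), by omega⟩

theorem colBeta_eq_betaNum_add_one_iff :
    colBeta lam j = betaNum lam i + 1 ↔ j = lam.rowLen i ∧ i = lam.colLen j := by
  constructor
  · intro h
    have hnot : (i, j) ∉ lam := fun hij => by
      have := mem_iff_colBeta_lt_betaNum.mp hij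
      omega
    have := mt YoungDiagram.mem_iff_lt_rowLen.mpr hnot
    have := mt YoungDiagram.mem_iff_lt_colLen.mpr hnot
    simp only [colBeta, betaNum] at h
    omega
  · rintro ⟨hj, hi⟩
    simp only [colBeta, betaNum]
    omega

theorem colBeta_eq_betaNum_sub_one_iff :
    colBeta lam j = betaNum lam i - 1 ↔ j + 1 = lam.rowLen i ∧ i + 1 = lam.colLen j := by
  constructor
  · intro h
    have hij : (i, j) ∈ lam := mem_iff_colBeta_lt_betaNum.mpr (by omega)
    have := YoungDiagram.mem_iff_lt_rowLen.mp hij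
    have := YoungDiagram.mem_iff_lt_colLen.mp hij
    simp only [colBeta, betaNum] at h
    omega
  · rintro ⟨hj, hi⟩
    simp only [colBeta, betaNum]
    omega

variable {n : ℕ} {r : ZMod n}

theorem addableRes_iff : AddableRes n r lam (i, j) ↔
    j = lam.rowLen i ∧ (betaNum lam i : ZMod n) = r ∧ betaNum lam i + 1 ∉ betaSet lam := by
  have hres : res n (i, lam.rowLen i) = betaNum lam i := by simp [res, betaNum]
  rw [AddableRes, addable_iff, ← colBeta_eq_betaNum_add_one_iff]
  constructor
  · rintro ⟨h, hr⟩
    obtain ⟨rfl, -⟩ := colBeta_eq_betaNum_add_one_iff.mp h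
    exact ⟨rfl, hres ▸ hr, h ▸ colBeta_notMem_betaSet _⟩
  · rintro ⟨rfl, hr, hgap⟩
    obtain ⟨j, hj⟩ := exists_colBeta_eq hgap
    obtain ⟨rfl, -⟩ := colBeta_eq_betaNum_add_one_iff.mp hj
    exact ⟨hj, hres ▸ hr⟩

theorem removableRes_iff : RemovableRes n r lam (i, j) ↔
    j + 1 = lam.rowLen i ∧ (betaNum lam i : ZMod n) = r + 1 ∧ betaNum lam i - 1 ∉ betaSet lam := by
  have hres : ∀ {j}, j + 1 = lam.rowLen i → (betaNum lam i : ZMod n) = res n (i, j) + 1 := by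
    intro j hj
    simp only [res, betaNum, ← hj]
    push_cast
    ring
  rw [RemovableRes, removable_iff, ← colBeta_eq_betaNum_sub_one_iff]
  constructor
  · rintro ⟨h, hr⟩
    obtain ⟨hj, -⟩ := colBeta_eq_betaNum_sub_one_iff.mp h
    exact ⟨hj, by rw [hres hj, hr], h ▸ colBeta_notMem_betaSet _⟩
  · rintro ⟨hj, hr, hgap⟩
    obtain ⟨j', hj'⟩ := exists_colBeta_eq hgap
    obtain ⟨hj'', -⟩ := colBeta_eq_betaNum_sub_one_iff.mp hj'
    obtain rfl : j' = j := by omega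
    exact ⟨hj', add_right_cancel (by rw [← hres hj, hr])⟩

end Diagrams

section Reflection

variable (n : ℕ) (r : ZMod n) (lam : YoungDiagram)

noncomputable def slideRowLen (i : ℕ) : ℕ :=
  (slideBead n r (betaSet lam) (betaNum lam i) + i).toNat

variable {n r lam}

theorem antitone_slideRowLen [Nontrivial (ZMod n)] : Antitone (slideRowLen n r lam) := by
  refine antitone_nat_of_succ_le fun i => ?_
  have hlt : betaNum lam (i + 1) < betaNum lam i := by
    have := lam.rowLen_anti i (i + 1) (by omega)
    simp only [betaNum]
    omega
  have := strictMonoOn_slideBead (n := n) (r := r) (B := betaSet lam) (Set.mem_range_self (i + 1))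
    (Set.mem_range_self i) hlt
  simp only [slideRowLen]
  omega

theorem slideRowLen_colLen_add_one : slideRowLen n r lam (lam.colLen 0 + 1) = 0 := by
  have hrow : ∀ k, lam.colLen 0 ≤ k → betaNum lam k = -k := fun k hk => by
    simp [betaNum, rowLen_eq_zero_of_colLen_le hk]
  have hfix : slideBead n r (betaSet lam) (betaNum lam (lam.colLen 0 + 1)) =
      betaNum lam (lam.colLen 0 + 1) := by
    apply slideBead_eq_self
    · exact ⟨lam.colLen 0, by rw [hrow _ le_rfl, hrow _ (by omega)]; push_cast; ring⟩
    · exact ⟨lam.colLen 0 + 2, by rw [hrow _ (by omega), hrow _ (by omega)]; push_cast; ring⟩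
  rw [slideRowLen, hfix, hrow _ (Nat.le_succ _)]
  omega

variable (n r lam)

noncomputable def sDiagram [Nontrivial (ZMod n)] : YoungDiagram :=
  ofRows (slideRowLen n r lam) antitone_slideRowLen _ slideRowLen_colLen_add_one

variable {n r lam} [Nontrivial (ZMod n)]

theorem betaNum_sDiagram (i : ℕ) :
    betaNum (sDiagram n r lam) i = slideBead n r (betaSet lam) (betaNum lam i) := by
  have hlow := @sub_one_le_slideBead n r (betaSet lam) (betaNum lam i)
  have hbeta : betaNum lam i = lam.rowLen i - i := rfl
  have hnonneg : 0 ≤ slideBead n r (betaSet lam) (betaNum lam i) + i := by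
    by_contra hneg
    have hnext : betaNum lam (i + 1) = betaNum lam i - 1 := by
      have := lam.rowLen_anti i (i + 1) (by omega)
      simp only [betaNum]
      omega
    have hdown : slideBead n r (betaSet lam) (betaNum lam i) = betaNum lam i - 1 := by omega
    refine slideBead_notMem (n := n) (r := r) (B := betaSet lam) (z := betaNum lam i)
      (by omega) ?_
    rw [hdown, ← hnext]
    exact Set.mem_range_self _
  rw [betaNum, sDiagram, rowLen_ofRows, slideRowLen]
  omega

theorem betaSet_sDiagram :
    betaSet (sDiagram n r lam) = slideBead n r (betaSet lam) '' betaSet lam := by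
  rw [betaSet, betaSet, ← Set.range_comp]
  exact congrArg Set.range (funext betaNum_sDiagram)

theorem coe_cells_sDiagram : (sDiagram n r lam).cells =
    ((lam.cells : Set (ℕ × ℕ)) ∪ {c | AddableRes n r lam c}) \ {c | RemovableRes n r lam c} := by
  ext ⟨a, b⟩
  simp only [Finset.mem_coe, YoungDiagram.mem_cells, Set.mem_sdiff, Set.mem_union,
    Set.mem_ofPred_eq, YoungDiagram.mem_iff_lt_rowLen]
  rw [addableRes_iff, removableRes_iff, ← slideBead_eq_add_one_iff, ← slideBead_eq_sub_one_iff]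
  have := betaNum_sDiagram (n := n) (r := r) (lam := lam) a
  have := @sub_one_le_slideBead n r (betaSet lam) (betaNum lam a)
  have := @slideBead_le_add_one n r (betaSet lam) (betaNum lam a)
  simp only [betaNum] at *
  omega

theorem isCore_sDiagram (hcore : IsCore n lam) : IsCore n (sDiagram n r lam) := by
  rw [isCore_iff_forall_sub_mem_betaSet] at hcore ⊢
  intro x hx
  rw [betaSet_sDiagram, mem_image_slideBead_iff] at hx ⊢
  rw [runnerSwap_sub_natCast]
  exact hcore _ hx

end Reflection

theorem sActSet_eq_of_isCore {n : ℕ} {r : ZMod n} {lam : YoungDiagram} (hcore : IsCore n lam) :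
    sActSet n r lam =
      ((lam.cells : Set (ℕ × ℕ)) ∪ {c | AddableRes n r lam c}) \ {c | RemovableRes n r lam c} := by
  have hexcl : ∀ c c', AddableRes n r lam c → ¬ RemovableRes n r lam c' := by
    rintro ⟨i, j⟩ ⟨i', j'⟩ hadd hrem
    rw [addableRes_iff] at hadd
    rw [removableRes_iff] at hrem
    exact hrem.2.2 (sub_one_mem_of_add_one_notMem (isCore_iff_forall_sub_mem_betaSet.mp hcore)
      (Set.mem_range_self i) hadd.2.1 hadd.2.2 (Set.mem_range_self i') hrem.2.1)
  rw [sActSet]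
  split_ifs with hadd hrem
  · obtain ⟨c, hc⟩ := hadd
    ext c'
    simp only [Set.mem_union, Set.mem_sdiff, Set.mem_ofPred_eq]
    exact ⟨fun h => ⟨h, hexcl c c' hc⟩, And.left⟩
  · ext c'
    simp [not_exists.mp hadd c']
  · ext c'
    simp [not_exists.mp hadd c', not_exists.mp hrem c']

/-- For an n-core λ and residue i, the result sᵢλ of adding all addable
i-boxes (resp. deleting all removable i-boxes, resp. doing nothing) is again an
n-core. -/
theorem statement6 (n : ℕ) (hn : 2 ≤ n) (lam : YoungDiagram) (hcore : IsCore n lam)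
    (r : ZMod n) :
    ∃ mu : YoungDiagram, (mu.cells : Set (ℕ × ℕ)) = sActSet n r lam ∧ IsCore n mu := by
  have : Fact (1 < n) := ⟨hn⟩
  exact ⟨sDiagram n r lam, by rw [coe_cells_sDiagram, sActSet_eq_of_isCore hcore],
    isCore_sDiagram hcore⟩

end FV
end

section
/- Let n ≥ 2, m ≥ 1, and let λ be an n-core. Then λ is also an (mn+1)-core if and only if ⟨n⃗(λ), αᵢ⟩ ≥ −m for all 1 ≤ i ≤ n−1 and ⟨n⃗(λ), θ⟩ ≤ m + 1. -/
open scoped BigOperators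

namespace FV

/-! A box `(i, j)` of hook length `h` corresponds to a gap at `βᵢ − h` below the bead
`βᵢ = hook (i, 0)` of the abacus, and every gap below `βᵢ` arises this way. Hence `λ` is an
`s`-core iff its bead set is closed under `z ↦ z − s`, a property invariant under shifts.
Since `λ` is an `n`-core, runner `c` of the balanced abacus is filled exactly up to level
`n⃗(λ)_c`, and closure under `mn + 1` only has to be checked on the top bead of each runner.
Moving `rn + c` down by `mn + 1` lands on runner `c − 1` at level `r − m`, or, for `c = 0`,
on runner `n − 1` at level `r − m − 1`; this gives `⟨n⃗, αᵢ⟩ ≥ −m` and `⟨n⃗, θ⟩ ≤ m + 1`. -/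

def SubClosed (s : ℤ) (B : Set ℤ) : Prop := ∀ z ∈ B, z - s ∈ B

section SubClosed

variable {s : ℤ} {B : Set ℤ}

lemma SubClosed.sub_mul_mem (hB : SubClosed s B) {z : ℤ} (hz : z ∈ B) (k : ℕ) :
    z - s * k ∈ B := by
  induction k with
  | zero => simpa using hz
  | succ k ih =>
    have h := hB _ ih
    rwa [show z - s * k - s = z - s * (k + 1 : ℕ) by push_cast; ring] at h

lemma subClosed_shiftSet_iff (d : ℤ) : SubClosed s (shiftSet d B) ↔ SubClosed s B := by
  refine ⟨fun h z hz => ?_, fun h z hz => ?_⟩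
  · have : z + d - s - d ∈ B := h (z + d) (by simpa [shiftSet] using hz)
    rwa [add_sub_right_comm, add_sub_cancel_right] at this
  · simpa [shiftSet, sub_right_comm] using h _ hz

lemma bddAbove_shiftSet (hB : BddAbove B) (d : ℤ) : BddAbove (shiftSet d B) := by
  obtain ⟨b, hb⟩ := hB
  exact ⟨b + d, fun z hz => by linarith [hb hz]⟩

end SubClosed

lemma exists_le_lt_succ {α : Type*} [LinearOrder α] (f : ℕ → α) {t : α} (h0 : f 0 ≤ t)
    {J : ℕ} (hJ : t < f J) : ∃ j, f j ≤ t ∧ t < f (j + 1) := by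
  induction J with
  | zero => exact absurd h0 (not_le.2 hJ)
  | succ J ih => exact (le_or_gt (f J) t).elim (fun h => ⟨J, h, hJ⟩) ih

section Beads

variable {lam : YoungDiagram}

lemma hook_eq_of_mem {i j : ℕ} (h : (i, j) ∈ lam) :
    (hook lam i j : ℤ) = lam.rowLen i - j + lam.colLen j - i - 1 := by
  have := YoungDiagram.mem_iff_lt_rowLen.1 h
  have := YoungDiagram.mem_iff_lt_colLen.1 h
  unfold hook
  omega

lemma hook_mem_beads {i : ℕ} (h : (i, 0) ∈ lam) : (hook lam i 0 : ℤ) ∈ beads lam :=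
  Or.inr ⟨i, h, rfl⟩

lemma bddAbove_beads (lam : YoungDiagram) : BddAbove (beads lam) := by
  refine ⟨lam.rowLen 0 + lam.colLen 0, ?_⟩
  rintro z (hz | ⟨k, hk, rfl⟩)
  · omega
  · have := hook_eq_of_mem hk
    have := lam.rowLen_anti 0 k k.zero_le
    omega

lemma hook_sub_hook_not_mem_beads {i j : ℕ} (h : (i, j) ∈ lam) :
    (hook lam i 0 : ℤ) - hook lam i j ∉ beads lam := by
  have hi0 := hook_eq_of_mem (lam.up_left_mem le_rfl j.zero_le h)
  have hij := hook_eq_of_mem h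
  have := lam.colLen_anti 0 j j.zero_le
  have := YoungDiagram.mem_iff_lt_colLen.1 h
  rintro (hneg | ⟨k, hk, he⟩)
  · omega
  · have hk0 := hook_eq_of_mem hk
    by_cases hkj : k < lam.colLen j
    · have := YoungDiagram.mem_iff_lt_rowLen.1 (YoungDiagram.mem_iff_lt_colLen.2 hkj)
      omega
    · have : lam.rowLen k ≤ j := not_lt.1 fun hjk =>
        hkj (YoungDiagram.mem_iff_lt_colLen.1 (YoungDiagram.mem_iff_lt_rowLen.2 hjk))
      omega

/-- The bead is the first-column hook of a row of length exactly `j + 1`. -/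
lemma add_colLen_mem_beads {j : ℕ} {t : ℤ} (h₁ : (j : ℤ) - lam.colLen j < t)
    (h₂ : t < ((j + 1 : ℕ) : ℤ) - lam.colLen (j + 1)) : t + lam.colLen 0 ∈ beads lam := by
  have := lam.colLen_anti j (j + 1) j.le_succ
  set k := lam.colLen j - (t - (j - lam.colLen j)).toNat
  have hkj : (k, j) ∈ lam := YoungDiagram.mem_iff_lt_colLen.2 (by omega)
  have : lam.rowLen k ≤ j + 1 := not_lt.1 fun hjk =>
    absurd (YoungDiagram.mem_iff_lt_colLen.1 (YoungDiagram.mem_iff_lt_rowLen.2 hjk)) (by omega)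
  have := YoungDiagram.mem_iff_lt_rowLen.1 hkj
  have hk0 : (k, 0) ∈ lam := lam.up_left_mem le_rfl j.zero_le hkj
  refine Or.inr ⟨k, hk0, ?_⟩
  have := hook_eq_of_mem hk0
  omega

lemma exists_hook_eq_of_not_mem_beads {i : ℕ} (h0 : (i, 0) ∈ lam) {g : ℤ} (hg0 : 0 ≤ g)
    (hg : g < hook lam i 0) (hgn : g ∉ beads lam) :
    ∃ j, (i, j) ∈ lam ∧ (hook lam i j : ℤ) = hook lam i 0 - g := by
  have hi0 := hook_eq_of_mem h0
  -- the nonnegative gaps of the abacus are the values `colLen 0 + j − colLen j`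
  obtain ⟨j, hle, hlt⟩ := exists_le_lt_succ (fun j : ℕ => (j : ℤ) - lam.colLen j)
    (t := g - lam.colLen 0) (J := g.toNat + 1) (by omega)
    (by have := lam.colLen_anti 0 (g.toNat + 1) (Nat.zero_le _); omega)
  rcases hle.lt_or_eq with hlt' | heq
  · exact absurd (by simpa using add_colLen_mem_beads hlt' hlt) hgn
  have hj : j < lam.rowLen i := by
    by_contra! hij
    have := lam.colLen_anti _ _ hij
    have : lam.colLen (lam.rowLen i) ≤ i := not_lt.1 fun hi =>
      (YoungDiagram.mem_iff_lt_rowLen.1 (YoungDiagram.mem_iff_lt_colLen.2 hi)).false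
    omega
  have hij := YoungDiagram.mem_iff_lt_rowLen.2 hj
  exact ⟨j, hij, by have := hook_eq_of_mem hij; omega⟩

lemma isCore_iff_subClosed_beads {s : ℕ} (hs : 0 < s) :
    IsCore s lam ↔ SubClosed s (beads lam) := by
  constructor
  · intro hcore z hz
    by_contra hzs
    have hz0 : 0 ≤ z - s := not_lt.1 fun h => hzs (Or.inl h)
    obtain ⟨k, hk, rfl⟩ := hz.resolve_left (by omega)
    obtain ⟨j, hj, hhook⟩ := exists_hook_eq_of_not_mem_beads hk hz0 (by omega) hzs
    exact hcore (k, j) ((YoungDiagram.mem_cells _).2 hj) ⟨1, show hook lam k j = s * 1 by omega⟩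
  · rintro hB ⟨i, j⟩ hij ⟨d, hd⟩
    have hij := (YoungDiagram.mem_cells _).1 hij
    apply hook_sub_hook_not_mem_beads hij
    have := hB.sub_mul_mem (hook_mem_beads (lam.up_left_mem le_rfl j.zero_le hij)) d
    rwa [hd, Nat.cast_mul]

end Beads

section Abacus

variable {n : ℕ} {B : Set ℤ} {a : ℤ}

lemma exists_eq_mul_add (hn : 0 < n) (z : ℤ) : ∃ r : ℤ, ∃ c < n, z = r * n + c := by
  have hnonneg := Int.emod_nonneg z (by omega : (n : ℤ) ≠ 0)
  have hlt := Int.emod_lt_of_pos z (by omega : (0 : ℤ) < n)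
  refine ⟨z / n, (z % n).toNat, by omega, ?_⟩
  rw [Int.toNat_of_nonneg hnonneg]
  exact (Int.ediv_mul_add_emod z n).symm

lemma bddAbove_runner (hn : 0 < n) (hup : BddAbove B) (c : ℕ) :
    BddAbove {r : ℤ | r * n + c ∈ B} := by
  obtain ⟨b, hb⟩ := hup
  refine ⟨|b|, fun r hr => ?_⟩
  have := hb hr
  have := le_abs_self b
  have := abs_nonneg b
  have : (1 : ℤ) ≤ n := by exact_mod_cast hn
  rcases le_or_gt r 0 with h | h <;> nlinarith

lemma runner_nonempty (hn : 0 < n) (hlow : ∀ z < a, z ∈ B) (c : ℕ) :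
    {r : ℤ | r * n + c ∈ B}.Nonempty := by
  refine ⟨-|a| - c - 1, hlow _ ?_⟩
  have := neg_abs_le a
  have : (1 : ℤ) ≤ n := by exact_mod_cast hn
  nlinarith [mul_nonneg (by positivity : (0 : ℤ) ≤ |a| + c + 1) (sub_nonneg.2 this)]

lemma mul_add_mem_iff_le_maxLevel
    (hn : 0 < n) (hB : SubClosed n B) (hlow : ∀ z < a, z ∈ B) (hup : BddAbove B) (c : ℕ) (r : ℤ) :
    r * n + c ∈ B ↔ r ≤ maxLevel n B c := by
  refine ⟨fun h => le_csSup (bddAbove_runner hn hup c) h, fun h => ?_⟩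
  have htop : maxLevel n B c * n + c ∈ B :=
    Int.csSup_mem (runner_nonempty hn hlow c) (bddAbove_runner hn hup c)
  convert hB.sub_mul_mem htop (maxLevel n B c - r).toNat using 1
  rw [Int.toNat_of_nonneg (by omega)]
  ring

lemma subClosed_iff_top_mem
    (hn : 0 < n) (hB : SubClosed n B) (hlow : ∀ z < a, z ∈ B) (hup : BddAbove B) (s : ℤ) :
    SubClosed s B ↔ ∀ c < n, maxLevel n B c * n + c - s ∈ B := by
  refine ⟨fun h c _ => h _ ((mul_add_mem_iff_le_maxLevel hn hB hlow hup c _).2 le_rfl),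
    fun h z hz => ?_⟩
  obtain ⟨r, c, hc, rfl⟩ := exists_eq_mul_add hn z
  have hr := (mul_add_mem_iff_le_maxLevel hn hB hlow hup c r).1 hz
  convert hB.sub_mul_mem (h c hc) (maxLevel n B c - r).toNat using 1
  rw [Int.toNat_of_nonneg (by omega)]
  ring

lemma subClosed_mul_add_one_iff
    (hn : 0 < n) (hB : SubClosed n B) (hlow : ∀ z < a, z ∈ B) (hup : BddAbove B) (m : ℕ) :
    SubClosed (m * n + 1) B ↔
      (∀ c : ℕ, 1 ≤ c → c ≤ n - 1 → -(m : ℤ) ≤ maxLevel n B (c - 1) - maxLevel n B c) ∧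
        maxLevel n B 0 - maxLevel n B (n - 1) ≤ m + 1 := by
  have mem_iff := mul_add_mem_iff_le_maxLevel hn hB hlow hup
  rw [subClosed_iff_top_mem hn hB hlow hup]
  constructor
  · intro h
    refine ⟨fun c hc1 hc2 => ?_, ?_⟩
    · have := (mem_iff (c - 1) (maxLevel n B c - m)).1 (by
        convert h c (by omega) using 1; push_cast [Nat.cast_sub hc1]; ring)
      omega
    · have := (mem_iff (n - 1) (maxLevel n B 0 - m - 1)).1 (by
        convert h 0 hn using 1; push_cast [Nat.cast_sub hn]; ring)
      omega
  · rintro ⟨hsucc, hzero⟩ c hc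
    rcases Nat.eq_zero_or_pos c with rfl | hc1
    · convert (mem_iff (n - 1) (maxLevel n B 0 - m - 1)).2 (by omega) using 1
      push_cast [Nat.cast_sub hn]; ring
    · convert (mem_iff (c - 1) (maxLevel n B c - m)).2 (by linarith [hsucc c hc1 (by omega)])
        using 1
      push_cast [Nat.cast_sub hc1]; ring

end Abacus

lemma ip_e_sub_e {n : ℕ} (v : Fin n → ℝ) {a b : ℕ} (ha : a < n) (hb : b < n) :
    ip n v (e n a - e n b) = v ⟨a, ha⟩ - v ⟨b, hb⟩ := by
  simp [ip, e, mul_sub, Finset.sum_sub_distrib, ← Fin.ext_iff (b := ⟨a, ha⟩),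
    ← Fin.ext_iff (b := ⟨b, hb⟩)]

lemma nvecR_apply (n : ℕ) (lam : YoungDiagram) (i : Fin n) :
    nvecR n lam i = maxLevel n (shiftSet (-balance n (beads lam)) (beads lam)) i := rfl

theorem statement9_general (n : ℕ) (hn : 2 ≤ n) (m : ℕ) (lam : YoungDiagram)
    (hcore : IsCore n lam) :
    IsCore (m * n + 1) lam ↔
      ((∀ i : ℕ, 1 ≤ i → i ≤ n - 1 → -(m : ℝ) ≤ ip n (nvecR n lam) (sroot n i)) ∧
        ip n (nvecR n lam) (theta n) ≤ (m : ℝ) + 1) := by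
  have hn0 : 0 < n := by omega
  set d := -balance n (beads lam)
  have hlow : ∀ z < d, z ∈ shiftSet d (beads lam) := fun z hz => Or.inl (by omega)
  have hB : SubClosed n (shiftSet d (beads lam)) :=
    (subClosed_shiftSet_iff d).2 ((isCore_iff_subClosed_beads hn0).1 hcore)
  rw [isCore_iff_subClosed_beads (by positivity), ← subClosed_shiftSet_iff d, Nat.cast_add,
    Nat.cast_mul, Nat.cast_one,
    subClosed_mul_add_one_iff hn0 hB hlow (bddAbove_shiftSet (bddAbove_beads lam) d)]
  refine and_congr (forall₃_congr fun i hi1 hi2 => ?_) ?_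
  · rw [sroot, ip_e_sub_e _ (by omega) (by omega)]
    simp only [nvecR_apply]
    norm_cast
  · rw [theta, ip_e_sub_e _ hn0 (by omega)]
    simp only [nvecR_apply]
    norm_cast

/-- An n-core λ is also an (mn+1)-core iff ⟨n⃗(λ),αᵢ⟩ ≥ −m for
1 ≤ i ≤ n−1 and ⟨n⃗(λ),θ⟩ ≤ m+1. -/
theorem statement9 (n : ℕ) (hn : 2 ≤ n) (m : ℕ) (hm : 1 ≤ m) (lam : YoungDiagram)
    (hcore : IsCore n lam) :
    IsCore (m * n + 1) lam ↔
      ((∀ i : ℕ, 1 ≤ i → i ≤ n - 1 → -(m : ℝ) ≤ ip n (nvecR n lam) (sroot n i)) ∧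
        ip n (nvecR n lam) (theta n) ≤ (m : ℝ) + 1) :=
  statement9_general n hn m lam hcore

end FV
end
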